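/- arXiv:1512.07619 — 5 statements merged into one kernel-verified Lean document; each statement's English description precedes it below -/
import Mathlib

section
/- Let t, r, a be real numbers such that Λ(t + a) = Λ(t) + r, and set f² = (Λ(t) + r)(1 − Λ(t) − r). If f² > 0 and |r| ≤ f²/4, then |a| ≤ 4|r|/(3f²). -/
/-!
With `p = Λ t` and `q = Λ (t + a) = p + r`, the correction is `a = logit q - logit p`. The
derivative `1 / (x (1 - x))` of `logit` is at most `4 / (3 f²)` between `p` and `q`, because
`x (1 - x)` is `1`-Lipschitz on `[0, 1]` and `x` lies within `|r| ≤ f² / 4` of `q`, where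
`q (1 - q) = f²`. The mean value inequality then gives `|a| ≤ 4 |r| / (3 f²)`.
-/

noncomputable def logistic : ℝ → ℝ := fun t => Real.exp t / (1 + Real.exp t)

open Real Set

noncomputable def logit (x : ℝ) : ℝ := log x - log (1 - x)

lemma logistic_eq_sigmoid : logistic = sigmoid := by
  ext t
  rw [logistic, sigmoid_def, exp_neg]
  field_simp
  ring

lemma logit_sigmoid (x : ℝ) : logit (sigmoid x) = x := by
  have h := congrArg log (sigmoid_mul_rexp_neg x)
  rw [log_mul (sigmoid_pos x).ne' (exp_pos _).ne', log_exp, sigmoid_neg] at h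
  rw [logit, ← h]
  ring

lemma hasDerivAt_logit {x : ℝ} (hx : x ∈ Ioo 0 1) : HasDerivAt logit (x * (1 - x))⁻¹ x := by
  have hx0 : x ≠ 0 := hx.1.ne'
  have h1x : 1 - x ≠ 0 := (sub_pos.2 hx.2).ne'
  refine (((hasDerivAt_id' x).log hx0).sub
    (((hasDerivAt_id' x).const_sub 1).log h1x)).congr_deriv ?_
  field_simp
  ring

lemma abs_mul_one_sub_sub_mul_one_sub_le {x y : ℝ} (hx : x ∈ Icc 0 1) (hy : y ∈ Icc 0 1) :
    |x * (1 - x) - y * (1 - y)| ≤ |x - y| := by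
  rw [show x * (1 - x) - y * (1 - y) = (x - y) * (1 - x - y) by ring, abs_mul]
  exact mul_le_of_le_one_right (abs_nonneg _)
    (abs_le.2 ⟨by linarith [hx.2, hy.2], by linarith [hx.1, hy.1]⟩)

lemma abs_logit_sub_le {p q m : ℝ} (hp : p ∈ Ioo 0 1) (hq : q ∈ Ioo 0 1) (hm : 0 < m)
    (hbound : ∀ x ∈ uIcc p q, m ≤ x * (1 - x)) :
    |logit q - logit p| ≤ |q - p| / m := by
  have hsub : uIcc p q ⊆ Ioo 0 1 := ordConnected_Ioo.uIcc_subset hp hq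
  have hderiv := (convex_uIcc p q).norm_image_sub_le_of_norm_hasDerivWithin_le
    (fun x hx => (hasDerivAt_logit (hsub hx)).hasDerivWithinAt)
    (fun x hx => show ‖(x * (1 - x))⁻¹‖ ≤ m⁻¹ by
      rw [norm_inv, Real.norm_of_nonneg (hm.le.trans (hbound x hx))]
      exact inv_anti₀ hm (hbound x hx))
    left_mem_uIcc right_mem_uIcc
  simpa [Real.norm_eq_abs, div_eq_inv_mul] using hderiv

theorem logistic_index_correction_bound (t r a f2 : ℝ)
    (ha : logistic (t + a) = logistic t + r)
    (hf2 : f2 = (logistic t + r) * (1 - logistic t - r))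
    (hf2pos : 0 < f2) (hr : |r| ≤ f2 / 4) :
    |a| ≤ 4 * |r| / (3 * f2) := by
  rw [logistic_eq_sigmoid] at ha hf2
  set p := sigmoid t
  have hp : p ∈ Ioo 0 1 := ⟨sigmoid_pos t, sigmoid_lt_one t⟩
  have hq : p + r ∈ Ioo 0 1 := ha ▸ ⟨sigmoid_pos _, sigmoid_lt_one _⟩
  have hf2q : f2 = (p + r) * (1 - (p + r)) := by rw [hf2]; ring
  have ha_logit : a = logit (p + r) - logit p := by
    rw [← ha, logit_sigmoid, logit_sigmoid]; ring
  have hbound : ∀ x ∈ uIcc p (p + r), 3 * f2 / 4 ≤ x * (1 - x) := by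
    intro x hx
    have hxq : |x - (p + r)| ≤ |r| := by
      simpa [abs_sub_comm] using abs_sub_right_of_mem_uIcc hx
    have hx01 : x ∈ Icc 0 1 := Ioo_subset_Icc_self (ordConnected_Ioo.uIcc_subset hp hq hx)
    have hlip := abs_mul_one_sub_sub_mul_one_sub_le hx01 (Ioo_subset_Icc_self hq)
    rw [← hf2q] at hlip
    linarith [(abs_le.1 hlip).1]
  calc |a| ≤ |r| / (3 * f2 / 4) := by
        simpa [ha_logit] using abs_logit_sub_le hp hq (by positivity) hbound
    _ = 4 * |r| / (3 * f2) := by field_simp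
end

section
/- Lasso cone lemma: Let f : ℝ^p → ℝ be convex and differentiable, let Ψ be a diagonal p×p matrix with strictly positive diagonal entries, let λ > 0 and c > 1. Suppose θ̂ minimizes θ ↦ f(θ) + λ‖Ψθ‖₁ over ℝ^p, and let θ* ∈ ℝ^p satisfy ‖Ψ⁻¹∇f(θ*)‖∞ ≤ λ/c. Then, with T = supp(θ*) and δ = θ̂ − θ*, the restricted cone condition holds: Σ_{j∉T} |Ψ_jj δ_j| ≤ ((c+1)/(c−1)) · Σ_{j∈T} |Ψ_jj δ_j|. -/
/-!
Compare the penalized objective at `θhat` and at `θstar`, and write `δ = θhat - θstar`.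
Minimality, together with the first-order bound `⟪∇f θstar, δ⟫ ≤ f θhat - f θstar` for the
convex function `f`, gives `λ (‖Ψ θhat‖₁ - ‖Ψ θstar‖₁) ≤ |⟪∇f θstar, δ⟫| ≤ (λ / c) ‖Ψ δ‖₁`
(Hölder for the dual pair of weighted norms). Off the support of `θstar` the penalty grows by
exactly `|Ψⱼ δⱼ|`, on it it shrinks by at most `|Ψⱼ δⱼ|`; rearranging the resulting inequality
`λ (A - B) ≤ (λ / c) (A + B)` between the off-support mass `A` and the on-support mass `B` gives
`A ≤ (c + 1) / (c - 1) B`.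
-/

open scoped Classical

open Finset

theorem ConvexOn.apply_sub_le_sub_of_hasFDerivAt {E : Type*} [NormedAddCommGroup E]
    [NormedSpace ℝ E] {s : Set E} {f : E → ℝ} {f' : E →L[ℝ] ℝ} {x y : E}
    (hf : ConvexOn ℝ s f) (hx : x ∈ s) (hy : y ∈ s) (hf' : HasFDerivAt f f' x) :
    f' (y - x) ≤ f y - f x := by
  have hline : ConvexOn ℝ (AffineMap.lineMap (k := ℝ) x y ⁻¹' s)
      (f ∘ AffineMap.lineMap (k := ℝ) x y) :=
    hf.comp_affineMap _
  have hderiv : HasDerivAt (f ∘ AffineMap.lineMap (k := ℝ) x y) (f' (y - x)) 0 := by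
    have hf'0 : HasFDerivAt f f' (AffineMap.lineMap (k := ℝ) x y (0 : ℝ)) := by
      rwa [AffineMap.lineMap_apply_zero]
    exact hf'0.comp_hasDerivAt 0 AffineMap.hasDerivAt_lineMap
  simpa [slope] using
    hline.le_slope_of_hasDerivAt (x := 0) (y := 1) (by simpa using hx) (by simpa using hy)
      one_pos hderiv

theorem abs_sum_mul_le_of_abs_inv_mul_le {ι : Type*} [Fintype ι] {w v d : ι → ℝ} {r : ℝ}
    (hw : ∀ j, w j ≠ 0) (hv : ∀ j, |(w j)⁻¹ * v j| ≤ r) :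
    |∑ j, v j * d j| ≤ r * ∑ j, |w j * d j| := by
  rw [mul_sum]
  refine (abs_sum_le_sum_abs _ _).trans (sum_le_sum fun j _ => ?_)
  calc |v j * d j| = |(w j)⁻¹ * v j| * |w j * d j| := by
        rw [← abs_mul]; field_simp [hw j]
    _ ≤ r * |w j * d j| := mul_le_mul_of_nonneg_right (hv j) (abs_nonneg _)

theorem sum_abs_off_support_sub_sum_abs_on_support_le {ι : Type*} [Fintype ι] (w x y : ι → ℝ) :
    ∑ j ∈ univ.filter (fun j => x j = 0), |w j * (y j - x j)| -
        ∑ j ∈ univ.filter (fun j => x j ≠ 0), |w j * (y j - x j)| ≤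
      ∑ j, |w j * y j| - ∑ j, |w j * x j| := by
  rw [← sum_sub_distrib, ← sum_filter_add_sum_filter_not univ (fun j => x j = 0), sub_eq_add_neg,
    ← sum_neg_distrib]
  gcongr with j hj j hj
  · simp [(mem_filter.mp hj).2]
  · have := abs_sub_abs_le_abs_sub (w j * x j) (w j * y j)
    rw [abs_sub_comm, ← mul_sub] at this
    linarith

theorem le_div_mul_of_mul_sub_le_div_mul {lam c A B : ℝ} (hlam : 0 < lam) (hc : 1 < c)
    (h : lam * (A - B) ≤ lam / c * (A + B)) : A ≤ (c + 1) / (c - 1) * B := by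
  have hc0 : 0 < c := one_pos.trans hc
  have h' : c * (A - B) ≤ A + B := by
    rw [div_mul_eq_mul_div, le_div_iff₀ hc0, mul_assoc, mul_comm (A - B)] at h
    exact le_of_mul_le_mul_left (by linarith) hlam
  rw [div_mul_eq_mul_div, le_div_iff₀ (by linarith)]
  linarith

theorem lasso_cone_condition (p : ℕ)
    (f : EuclideanSpace ℝ (Fin p) → ℝ)
    (g : EuclideanSpace ℝ (Fin p) → EuclideanSpace ℝ (Fin p))
    (hconv : ConvexOn ℝ Set.univ f)
    (hgrad : ∀ θ, HasGradientAt f (g θ) θ)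
    (Ψ : Fin p → ℝ) (hΨ : ∀ j, 0 < Ψ j)
    (lam c : ℝ) (hlam : 0 < lam) (hc : 1 < c)
    (θhat θstar : EuclideanSpace ℝ (Fin p))
    (hmin : ∀ θ : EuclideanSpace ℝ (Fin p),
      f θhat + lam * ∑ j, |Ψ j * θhat j| ≤ f θ + lam * ∑ j, |Ψ j * θ j|)
    (hscore : ∀ j, |(Ψ j)⁻¹ * g θstar j| ≤ lam / c) :
    ∑ j ∈ Finset.univ.filter (fun j => θstar j = 0), |Ψ j * (θhat j - θstar j)| ≤
      ((c + 1) / (c - 1)) *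
        ∑ j ∈ Finset.univ.filter (fun j => θstar j ≠ 0), |Ψ j * (θhat j - θstar j)| := by
  refine le_div_mul_of_mul_sub_le_div_mul hlam hc ?_
  have hfirst_order : ∑ j, g θstar j * (θhat j - θstar j) ≤ f θhat - f θstar := by
    simpa [PiLp.inner_apply, mul_comm] using
      hconv.apply_sub_le_sub_of_hasFDerivAt trivial trivial (hgrad θstar).hasFDerivAt
  have hpenalty := sum_abs_off_support_sub_sum_abs_on_support_le Ψ θstar θhat
  calc lam * (_ - _) ≤ lam * (∑ j, |Ψ j * θhat j| - ∑ j, |Ψ j * θstar j|) := by gcongr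
    _ ≤ f θstar - f θhat := by linarith [hmin θstar]
    _ ≤ |∑ j, g θstar j * (θhat j - θstar j)| := by
      linarith [neg_abs_le (∑ j, g θstar j * (θhat j - θstar j))]
    _ ≤ lam / c * ∑ j, |Ψ j * (θhat j - θstar j)| :=
      abs_sum_mul_le_of_abs_inv_mul_le (fun j => (hΨ j).ne') hscore
    _ = lam / c * (_ + _) := by rw [sum_filter_add_sum_filter_not]
end

section
/- Lasso prediction-rate bound: Let X be an n×p real matrix, ε ∈ ℝⁿ, θ* ∈ ℝ^p with support T of cardinality s ≥ 1, and Y = Xθ* + ε. Let θ̂ minimize θ ↦ (1/(2n))‖Y − Xθ‖₂² + (λ/n)‖θ‖₁. Suppose λ ≥ c·‖Xᵀε‖∞ for some c > 1, and let c̄ = (c+1)/(c−1). Assume the restricted eigenvalue condition: there is κ > 0 such that for every δ ≠ 0 with ‖δ_{T^c}‖₁ ≤ c̄‖δ_T‖₁ one has ‖Xδ‖₂/√n ≥ κ‖δ_T‖₂. Then ‖X(θ̂ − θ*)‖₂/√n ≤ (1 + 1/c)·λ√s/(n·κ). -/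
/-!
With `δ = θhat - θstar`, testing the optimality of `θhat` against `θhat - t • δ` and letting
`t → 0⁺` gives the first-order inequality `‖Xδ‖² ≤ ⟪ε, Xδ⟫ + λ (‖θstar‖₁ - ‖θhat‖₁)`; comparing
objective values directly would lose a factor 2 in the rate. Since `⟪ε, Xδ⟫ = ⟪Xᵀε, δ⟫ ≤ (λ/c) ‖δ‖₁`
and `‖θstar‖₁ - ‖θhat‖₁ ≤ ‖δ_T‖₁ - ‖δ_Tᶜ‖₁`, this yields
`‖Xδ‖² ≤ (1 + 1/c) λ ‖δ_T‖₁ - (1 - 1/c) λ ‖δ_Tᶜ‖₁`. Hence `δ` lies in the cone of the restricted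
eigenvalue condition, and Cauchy–Schwarz `‖δ_T‖₁ ≤ √s ‖δ_T‖₂ ≤ √s ‖Xδ‖₂ / (√n κ)` closes the bound.
-/

open scoped Classical

open Finset Filter Topology Matrix

theorem nonneg_of_forall_pos_nonneg_add_mul {a b : ℝ}
    (h : ∀ t : ℝ, 0 < t → t ≤ 1 → 0 ≤ a + t * b) : 0 ≤ a := by
  have hcont : Continuous fun t : ℝ => a + t * b := by fun_prop
  have hlim : Tendsto (fun t => a + t * b) (𝓝[>] 0) (𝓝 a) := by
    simpa using (hcont.tendsto 0).mono_left nhdsWithin_le_nhds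
  refine ge_of_tendsto hlim ?_
  filter_upwards [Ioo_mem_nhdsGT one_pos] with t ht using h t ht.1 ht.2.le

section

variable {m ι : Type*} [Fintype m] [Fintype ι]

theorem sum_abs_sub_smul_sub_le (θ' θ : ι → ℝ) {t : ℝ} (ht₀ : 0 ≤ t) (ht₁ : t ≤ 1) :
    ∑ j, |(θ' - t • (θ' - θ)) j| ≤ (1 - t) * ∑ j, |θ' j| + t * ∑ j, |θ j| := by
  rw [mul_sum, mul_sum, ← sum_add_distrib]
  refine sum_le_sum fun j _ => ?_
  calc |(θ' - t • (θ' - θ)) j| = |(1 - t) * θ' j + t * θ j| := by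
        simp only [Pi.sub_apply, Pi.smul_apply, smul_eq_mul]; ring_nf
    _ ≤ |(1 - t) * θ' j| + |t * θ j| := abs_add_le _ _
    _ = (1 - t) * |θ' j| + t * |θ j| := by
        rw [abs_mul, abs_mul, abs_of_nonneg (sub_nonneg.2 ht₁), abs_of_nonneg ht₀]

theorem sum_sq_add_mul (r b : m → ℝ) (t : ℝ) :
    ∑ i, (r i + t * b i) ^ 2 = ∑ i, r i ^ 2 + 2 * t * (r ⬝ᵥ b) + t ^ 2 * ∑ i, b i ^ 2 := by
  simp only [dotProduct, mul_sum, ← sum_add_distrib]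
  exact sum_congr rfl fun i _ => by ring

theorem lasso_first_order_inequality {X : Matrix m ι ℝ} {Y : m → ℝ} {θhat : ι → ℝ} {lam : ℝ}
    (hlam : 0 ≤ lam)
    (hmin : ∀ θ : ι → ℝ,
      1 / 2 * ∑ i, (Y i - (X *ᵥ θhat) i) ^ 2 + lam * ∑ j, |θhat j| ≤
        1 / 2 * ∑ i, (Y i - (X *ᵥ θ) i) ^ 2 + lam * ∑ j, |θ j|)
    (θ : ι → ℝ) :
    ∑ i, (X *ᵥ (θhat - θ)) i ^ 2 ≤
      (Y - X *ᵥ θ) ⬝ᵥ X *ᵥ (θhat - θ) + lam * (∑ j, |θ j| - ∑ j, |θhat j|) := by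
  set b := X *ᵥ (θhat - θ)
  set r := Y - X *ᵥ θhat
  have hr : Y - X *ᵥ θ = r + b := by simp only [r, b, mulVec_sub]; abel
  suffices 0 ≤ r ⬝ᵥ b + lam * (∑ j, |θ j| - ∑ j, |θhat j|) by
    have hbb : b ⬝ᵥ b = ∑ i, b i ^ 2 := by simp only [dotProduct, sq]
    rw [hr, add_dotProduct, hbb]; linarith
  refine nonneg_of_forall_pos_nonneg_add_mul (b := (∑ i, b i ^ 2) / 2) fun t ht₀ ht₁ => ?_
  have hres : ∀ i, Y i - (X *ᵥ (θhat - t • (θhat - θ))) i = r i + t * b i := fun i => by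
    simp only [r, b, mulVec_sub, mulVec_smul, Pi.sub_apply, Pi.smul_apply, smul_eq_mul]; ring
  have hquad : ∑ i, (Y i - (X *ᵥ (θhat - t • (θhat - θ))) i) ^ 2 =
      ∑ i, r i ^ 2 + 2 * t * (r ⬝ᵥ b) + t ^ 2 * ∑ i, b i ^ 2 := by
    rw [← sum_sq_add_mul]; exact sum_congr rfl fun i _ => by rw [hres i]
  have hopt := hmin (θhat - t • (θhat - θ))
  rw [hquad] at hopt
  have hl₁ := mul_le_mul_of_nonneg_left (sum_abs_sub_smul_sub_le θhat θ ht₀.le ht₁) hlam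
  refine (mul_nonneg_iff_of_pos_left ht₀).1 ?_
  change 1 / 2 * ∑ i, r i ^ 2 + _ ≤ _ at hopt
  nlinarith

theorem dotProduct_le_mul_sum_abs {a b : ι → ℝ} {M : ℝ} (h : ∀ j, |a j| ≤ M) :
    a ⬝ᵥ b ≤ M * ∑ j, |b j| := by
  rw [dotProduct, mul_sum]
  refine sum_le_sum fun j _ => ?_
  calc a j * b j ≤ |a j| * |b j| := by rw [← abs_mul]; exact le_abs_self _
    _ ≤ M * |b j| := by gcongr; exact h j

theorem sum_abs_sub_sum_abs_le_of_support_subset [DecidableEq ι] {θ : ι → ℝ} {T : Finset ι}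
    (hθ : ∀ j ∉ T, θ j = 0) (θ' : ι → ℝ) :
    ∑ j, |θ j| - ∑ j, |θ' j| ≤ ∑ j ∈ T, |(θ' - θ) j| - ∑ j ∈ Tᶜ, |(θ' - θ) j| := by
  rw [← sum_add_sum_compl T fun j => |θ j|, ← sum_add_sum_compl T fun j => |θ' j|]
  have hθ_compl : ∑ j ∈ Tᶜ, |θ j| = 0 :=
    sum_eq_zero fun j hj => by simp [hθ j (mem_compl.1 hj)]
  have hδ_compl : ∑ j ∈ Tᶜ, |(θ' - θ) j| = ∑ j ∈ Tᶜ, |θ' j| :=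
    sum_congr rfl fun j hj => by simp [hθ j (mem_compl.1 hj)]
  have hδ_on : ∑ j ∈ T, |θ j| - ∑ j ∈ T, |θ' j| ≤ ∑ j ∈ T, |(θ' - θ) j| := by
    rw [← sum_sub_distrib]
    exact sum_le_sum fun j _ => by
      simpa [abs_sub_comm] using abs_sub_abs_le_abs_sub (θ j) (θ' j)
  linarith

theorem lasso_basic_inequality [DecidableEq ι] {X : Matrix m ι ℝ} {ε : m → ℝ}
    {θstar θhat : ι → ℝ} {T : Finset ι} {lam c : ℝ} (hT : ∀ j ∉ T, θstar j = 0) (hc : 0 < c)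
    (hlam₀ : 0 ≤ lam) (hlam : ∀ j, c * |(Xᵀ *ᵥ ε) j| ≤ lam)
    (hmin : ∀ θ : ι → ℝ,
      1 / 2 * ∑ i, ((X *ᵥ θstar + ε) i - (X *ᵥ θhat) i) ^ 2 + lam * ∑ j, |θhat j| ≤
        1 / 2 * ∑ i, ((X *ᵥ θstar + ε) i - (X *ᵥ θ) i) ^ 2 + lam * ∑ j, |θ j|) :
    ∑ i, (X *ᵥ (θhat - θstar)) i ^ 2 ≤
      lam / c * (∑ j ∈ T, |(θhat - θstar) j| + ∑ j ∈ Tᶜ, |(θhat - θstar) j|) +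
        lam * (∑ j ∈ T, |(θhat - θstar) j| - ∑ j ∈ Tᶜ, |(θhat - θstar) j|) := by
  have hfirst := lasso_first_order_inequality hlam₀ hmin θstar
  have hnoise : ε ⬝ᵥ X *ᵥ (θhat - θstar) ≤ lam / c * ∑ j, |(θhat - θstar) j| := by
    rw [dotProduct_mulVec, ← mulVec_transpose]
    exact dotProduct_le_mul_sum_abs fun j => (le_div_iff₀' hc).2 (hlam j)
  rw [← sum_add_sum_compl T] at hnoise
  have hl₁ := mul_le_mul_of_nonneg_left (sum_abs_sub_sum_abs_le_of_support_subset hT θhat) hlam₀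
  rw [add_sub_cancel_left] at hfirst
  linarith

end

-- Both rest on `lam / c * (a + b) + lam * (a - b) = (1 + 1 / c) * lam * a - (1 - 1 / c) * lam * b`.
theorem le_of_basic_inequality {Q lam c a b : ℝ} (hc : 1 < c) (hlam : 0 ≤ lam) (hb : 0 ≤ b)
    (h : Q ≤ lam / c * (a + b) + lam * (a - b)) : Q ≤ (1 + 1 / c) * lam * a := by
  have hb' : lam / c * b ≤ lam * b := by
    gcongr; exact div_le_self hlam hc.le
  have hsplit : lam / c * (a + b) + lam * (a - b) =
      (1 + 1 / c) * lam * a + (lam / c * b - lam * b) := by ring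
  linarith

theorem cone_of_basic_inequality {Q lam c a b : ℝ} (hc : 1 < c) (hlam : 0 < lam) (hQ : 0 ≤ Q)
    (h : Q ≤ lam / c * (a + b) + lam * (a - b)) : b ≤ (c + 1) / (c - 1) * a := by
  have hc₀ : 0 < c := by linarith
  have hpos : 0 ≤ lam / c * ((c + 1) * a - b * (c - 1)) := by
    rw [show lam / c * ((c + 1) * a - b * (c - 1)) = lam / c * (a + b) + lam * (a - b) by
      field_simp; ring]
    linarith
  have := (mul_nonneg_iff_of_pos_left (div_pos hlam hc₀)).1 hpos
  rw [div_mul_eq_mul_div, le_div_iff₀ (sub_pos.2 hc)]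
  linarith

theorem sqrt_div_sqrt_le_of_restricted_eigenvalue {Q A S P κ s n : ℝ} (hQ : 0 < Q) (hn : 0 < n)
    (hκ : 0 < κ) (hA : 0 ≤ A) (hQS : Q ≤ A * S) (hS : S ≤ √s * √P) (hP : κ * √P ≤ √Q / √n) :
    √Q / √n ≤ A * √s / (n * κ) := by
  have hq : 0 < √Q := Real.sqrt_pos.2 hQ
  have hr : 0 < √n := Real.sqrt_pos.2 hn
  have hP' : √P ≤ √Q / √n / κ := by rw [le_div_iff₀ hκ, mul_comm]; exact hP
  have hsq : √Q * √Q ≤ A * √s / (√n * κ) * √Q :=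
    calc √Q * √Q = Q := Real.mul_self_sqrt hQ.le
      _ ≤ A * (√s * (√Q / √n / κ)) := hQS.trans (by gcongr; exact hS.trans (by gcongr))
      _ = A * √s / (√n * κ) * √Q := by field_simp
  calc √Q / √n ≤ A * √s / (√n * κ) / √n := by gcongr; exact le_of_mul_le_mul_right hsq hq
    _ = A * √s / (n * κ) := by
      rw [div_div, mul_right_comm, Real.mul_self_sqrt hn.le]

theorem lasso_prediction_rate (n p : ℕ) (hn : 0 < n)
    (X : Matrix (Fin n) (Fin p) ℝ) (ε : Fin n → ℝ) (θstar : Fin p → ℝ)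
    (T : Finset (Fin p)) (hT : T = Finset.univ.filter (fun j => θstar j ≠ 0))
    (s : ℕ) (hsdef : s = T.card) (hs : 1 ≤ s)
    (Y : Fin n → ℝ) (hY : Y = X.mulVec θstar + ε)
    (lam c κ cbar : ℝ) (hc : 1 < c) (hκ : 0 < κ) (hcbar : cbar = (c + 1) / (c - 1))
    (hlam : ∀ j, c * |∑ i, X i j * ε i| ≤ lam)
    (θhat : Fin p → ℝ)
    (hmin : ∀ θ : Fin p → ℝ,
      (1 / (2 * n)) * ∑ i, (Y i - X.mulVec θhat i) ^ 2 + (lam / n) * ∑ j, |θhat j| ≤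
        (1 / (2 * n)) * ∑ i, (Y i - X.mulVec θ i) ^ 2 + (lam / n) * ∑ j, |θ j|)
    (hRE : ∀ δ : Fin p → ℝ, δ ≠ 0 →
      (∑ j ∈ Finset.univ.filter (fun j => θstar j = 0), |δ j|) ≤ cbar * ∑ j ∈ T, |δ j| →
      κ * Real.sqrt (∑ j ∈ T, (δ j) ^ 2) ≤
        Real.sqrt (∑ i, (X.mulVec δ i) ^ 2) / Real.sqrt n) :
    Real.sqrt (∑ i, (X.mulVec (θhat - θstar) i) ^ 2) / Real.sqrt n ≤
      (1 + 1 / c) * lam * Real.sqrt s / (n * κ) := by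
  subst hY hcbar
  have hn' : (0 : ℝ) < n := Nat.cast_pos.2 hn
  obtain ⟨j₀, -⟩ : T.Nonempty := card_pos.1 (hsdef ▸ hs)
  have hlam₀ : 0 ≤ lam := (mul_nonneg (by linarith) (abs_nonneg _)).trans (hlam j₀)
  have hsupp : ∀ j ∉ T, θstar j = 0 := by simp [hT]
  have hTc : univ.filter (fun j => θstar j = 0) = Tᶜ := by ext j; simp [hT]
  have hnormalized : ∀ A B : ℝ, 1 / (2 * n) * A + lam / n * B = (1 / 2 * A + lam * B) / n :=
    fun A B => by field_simp
  have hbasic := lasso_basic_inequality (X := X) (ε := ε) hsupp (by linarith) hlam₀ hlam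
    fun θ => by simpa only [hnormalized, div_le_div_iff_of_pos_right hn'] using hmin θ
  set δ := θhat - θstar
  rcases (sum_nonneg fun i _ => sq_nonneg ((X *ᵥ δ) i)).eq_or_lt with hQ | hQ
  · rw [← hQ, Real.sqrt_zero, zero_div]; positivity
  have hQle := le_of_basic_inequality hc hlam₀ (sum_nonneg fun j _ => abs_nonneg _) hbasic
  have hlam_pos : 0 < lam := by
    refine hlam₀.lt_of_ne fun h => ?_
    rw [← h, mul_zero, zero_mul] at hQle; linarith
  have hδ : δ ≠ 0 := by rintro hδ; simp [hδ] at hQ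
  have hRE' := hRE δ hδ (hTc ▸ cone_of_basic_inequality hc hlam_pos hQ.le hbasic)
  have hCS : ∑ j ∈ T, |δ j| ≤ √s * √(∑ j ∈ T, δ j ^ 2) := by
    simpa [hsdef] using Real.sum_mul_le_sqrt_mul_sqrt T (fun _ => 1) fun j => |δ j|
  exact sqrt_div_sqrt_le_of_restricted_eigenvalue hQ hn' hκ (by positivity) hQle hCS hRE'
end

section
/- Sublinearity of maximum sparse eigenvalues: Let X be an n×p real matrix and for a positive integer m define φ(m) = sup{‖Xδ‖₂² : δ ∈ ℝ^p, ‖δ‖₀ ≤ m, ‖δ‖₂ ≤ 1}. Then for all positive integers m, k with mk ≤ p, φ(m·k) ≤ m·φ(k). -/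
open scoped Classical

/-!
A vector `δ` with at most `m k` nonzero coordinates splits as `δ = δ₀ + ⋯ + δₘ₋₁` with disjointly
supported, `k`-sparse blocks, so `∑ₜ ‖δₜ‖² = ‖δ‖²`. By homogeneity `‖X δₜ‖² ≤ φ(k) ‖δₜ‖²`, and
Cauchy–Schwarz over the `m` blocks gives
`‖X δ‖² ≤ m ∑ₜ ‖X δₜ‖² ≤ m φ(k) ∑ₜ ‖δₜ‖² = m φ(k) ‖δ‖² ≤ m φ(k)`.
-/

open Finset

theorem Finset.exists_injOn_lt_card {α : Type*} (s : Finset α) :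
    ∃ i : α → ℕ, Set.InjOn i s ∧ ∀ a ∈ s, i a < #s := by
  refine ⟨fun a => if h : a ∈ s then s.equivFin ⟨a, h⟩ else 0, fun a ha b hb hab => ?_,
    fun a ha => by simp [ha]⟩
  rw [mem_coe] at ha hb
  simpa [ha, hb, Fin.val_inj] using hab

/-- Cut the enumeration `0, 1, …, #s - 1` of `s` into consecutive runs of length `k`. -/
theorem Finset.exists_fiber_card_le {α : Type*} (s : Finset α) {m k : ℕ} (h : #s ≤ m * k) :
    ∃ c : α → ℕ, (∀ a ∈ s, c a < m) ∧ ∀ t, #{a ∈ s | c a = t} ≤ k := by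
  rcases k.eq_zero_or_pos with rfl | hk
  · exact ⟨0, by simp_all, by simp_all⟩
  obtain ⟨i, hi_inj, hi_lt⟩ := s.exists_injOn_lt_card
  refine ⟨fun a => i a / k, fun a ha => Nat.div_lt_of_lt_mul ?_, fun t => ?_⟩
  · linarith [hi_lt a ha, mul_comm m k]
  calc #{a ∈ s | i a / k = t} ≤ #(range k) := by
        refine card_le_card_of_injOn (fun a => i a % k) (fun a _ => ?_) fun a ha b hb hab => ?_
        · simpa using Nat.mod_lt _ hk
        · simp only [coe_filter, Set.mem_ofPred_eq] at ha hb
          refine hi_inj ha.1 hb.1 ?_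
          rw [← Nat.div_add_mod (i a) k, ← Nat.div_add_mod (i b) k, ha.2, hb.2]
          exact congrArg _ hab
    _ = k := card_range k

theorem exists_sparse_decomposition {ι R : Type*} [Fintype ι] [Semiring R] (δ : ι → R) {m k : ℕ}
    (h : #{j | δ j ≠ 0} ≤ m * k) :
    ∃ d : ℕ → ι → R, (∀ t, #{j | d t j ≠ 0} ≤ k) ∧ ∑ t ∈ range m, d t = δ ∧
      ∑ t ∈ range m, ∑ j, d t j ^ 2 = ∑ j, δ j ^ 2 := by
  obtain ⟨c, hc_lt, hc_card⟩ := exists_fiber_card_le _ h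
  have hsum (g : R → R) (hg : g 0 = 0) (j : ι) :
      ∑ t ∈ range m, g (if c j = t then δ j else 0) = g (δ j) := by
    by_cases hj : δ j = 0
    · simp [hj, hg]
    · simp [apply_ite g, hg, hc_lt j (by simpa using hj)]
  refine ⟨fun t j => if c j = t then δ j else 0, fun t => ?_, ?_, ?_⟩
  · refine (card_le_card fun j => ?_).trans (hc_card t)
    simp only [mem_filter, mem_univ, true_and, ne_eq, ite_eq_right_iff, not_forall]
    tauto
  · funext j
    simpa using hsum id rfl j
  · rw [sum_comm]
    exact sum_congr rfl fun j _ => hsum (· ^ 2) (zero_pow two_ne_zero) j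

theorem sum_sq_sum_le_card_mul {ι κ : Type*} [Fintype κ] (s : Finset ι) (f : ι → κ → ℝ) :
    ∑ i, (∑ t ∈ s, f t i) ^ 2 ≤ #s * ∑ t ∈ s, ∑ i, f t i ^ 2 := by
  rw [sum_comm, mul_sum]
  exact sum_le_sum fun i _ => sq_sum_le_card_mul_sum_sq

theorem sum_sq_smul {ι R : Type*} [Fintype ι] [CommSemiring R] (a : R) (v : ι → R) :
    ∑ j, (a • v) j ^ 2 = a ^ 2 * ∑ j, v j ^ 2 := by
  simp [mul_pow, mul_sum]

theorem sum_sq_mulVec_le {ι κ : Type*} [Fintype ι] [Fintype κ] (X : Matrix κ ι ℝ) (v : ι → ℝ) :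
    ∑ i, X.mulVec v i ^ 2 ≤ (∑ i, ∑ j, X i j ^ 2) * ∑ j, v j ^ 2 := by
  rw [sum_mul]
  exact sum_le_sum fun i _ => sum_mul_sq_le_sq_mul_sq _ _ _

section SparseEigenvalue

variable {ι κ : Type*} [Fintype ι] [Fintype κ] (X : Matrix κ ι ℝ)

def sparseRayleighValues (c : ℕ) : Set ℝ :=
  {y : ℝ | ∃ δ : ι → ℝ, #{j | δ j ≠ 0} ≤ c ∧ ∑ j, δ j ^ 2 ≤ 1 ∧ y = ∑ i, X.mulVec δ i ^ 2}

noncomputable def maxSparseEigenvalue (c : ℕ) : ℝ :=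
  sSup (sparseRayleighValues X c)

theorem bddAbove_sparseRayleighValues (c : ℕ) : BddAbove (sparseRayleighValues X c) := by
  refine ⟨∑ i, ∑ j, X i j ^ 2, ?_⟩
  rintro _ ⟨δ, -, hδ, rfl⟩
  calc ∑ i, X.mulVec δ i ^ 2 ≤ (∑ i, ∑ j, X i j ^ 2) * ∑ j, δ j ^ 2 := sum_sq_mulVec_le X δ
    _ ≤ ∑ i, ∑ j, X i j ^ 2 := mul_le_of_le_one_right (by positivity) hδ

theorem le_maxSparseEigenvalue {c : ℕ} {δ : ι → ℝ} (hδ : #{j | δ j ≠ 0} ≤ c)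
    (hδ_norm : ∑ j, δ j ^ 2 ≤ 1) : ∑ i, X.mulVec δ i ^ 2 ≤ maxSparseEigenvalue X c :=
  le_csSup (bddAbove_sparseRayleighValues X c) ⟨δ, hδ, hδ_norm, rfl⟩

theorem maxSparseEigenvalue_nonneg (c : ℕ) : 0 ≤ maxSparseEigenvalue X c := by
  simpa using le_maxSparseEigenvalue X (c := c) (δ := 0) (by simp) (by simp)

theorem sum_sq_mulVec_le_maxSparseEigenvalue_mul {c : ℕ} {v : ι → ℝ} (hv : #{j | v j ≠ 0} ≤ c) :
    ∑ i, X.mulVec v i ^ 2 ≤ maxSparseEigenvalue X c * ∑ j, v j ^ 2 := by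
  set N := ∑ j, v j ^ 2
  rcases (show 0 ≤ N by positivity).eq_or_lt with hN | hN
  · obtain rfl : v = 0 := funext fun j => by
      simpa using (sum_eq_zero_iff_of_nonneg fun j _ => sq_nonneg (v j)).mp hN.symm j
    simp [← hN]
  have hsq : (√N)⁻¹ ^ 2 = N⁻¹ := by rw [inv_pow, Real.sq_sqrt hN.le]
  have hscaled := le_maxSparseEigenvalue X (c := c) (δ := (√N)⁻¹ • v)
    (by simpa [Real.sqrt_ne_zero'.mpr hN] using hv) (by rw [sum_sq_smul, hsq, inv_mul_cancel₀ hN.ne'])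
  rw [Matrix.mulVec_smul, sum_sq_smul, hsq] at hscaled
  exact ((inv_mul_le_iff₀ hN).mp hscaled).trans_eq (mul_comm _ _)

theorem maxSparseEigenvalue_mul_le (m k : ℕ) :
    maxSparseEigenvalue X (m * k) ≤ m * maxSparseEigenvalue X k := by
  have hφ := maxSparseEigenvalue_nonneg X k
  refine Real.sSup_le ?_ (by positivity)
  rintro _ ⟨δ, hδ, hδ_norm, rfl⟩
  obtain ⟨d, hd_sparse, hd_sum, hd_norm⟩ := exists_sparse_decomposition δ hδ
  calc ∑ i, X.mulVec δ i ^ 2 = ∑ i, (∑ t ∈ range m, X.mulVec (d t) i) ^ 2 := by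
        simp [← hd_sum, Matrix.mulVec_sum]
    _ ≤ m * ∑ t ∈ range m, ∑ i, X.mulVec (d t) i ^ 2 := by
        simpa using sum_sq_sum_le_card_mul (range m) fun t => X.mulVec (d t)
    _ ≤ m * ∑ t ∈ range m, maxSparseEigenvalue X k * ∑ j, d t j ^ 2 := by
        gcongr with t
        exact sum_sq_mulVec_le_maxSparseEigenvalue_mul X (hd_sparse t)
    _ = m * (maxSparseEigenvalue X k * ∑ j, δ j ^ 2) := by rw [← mul_sum, hd_norm]
    _ ≤ m * maxSparseEigenvalue X k := by gcongr; exact mul_le_of_le_one_right hφ hδ_norm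

end SparseEigenvalue

theorem sparse_eigenvalue_sublinear_general (n p : ℕ) (X : Matrix (Fin n) (Fin p) ℝ)
    (φ : ℕ → ℝ)
    (hφ : ∀ m : ℕ, φ m = sSup {y : ℝ | ∃ δ : Fin p → ℝ,
      (Finset.univ.filter (fun j => δ j ≠ 0)).card ≤ m ∧
        (∑ j, (δ j) ^ 2) ≤ 1 ∧ y = ∑ i, (X.mulVec δ i) ^ 2})
    (m k : ℕ) :
    φ (m * k) ≤ m * φ k := by
  rw [hφ, hφ]
  exact maxSparseEigenvalue_mul_le X m k

theorem sparse_eigenvalue_sublinear (n p : ℕ) (X : Matrix (Fin n) (Fin p) ℝ)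
    (φ : ℕ → ℝ)
    (hφ : ∀ m : ℕ, φ m = sSup {y : ℝ | ∃ δ : Fin p → ℝ,
      (Finset.univ.filter (fun j => δ j ≠ 0)).card ≤ m ∧
        (∑ j, (δ j) ^ 2) ≤ 1 ∧ y = ∑ i, (X.mulVec δ i) ^ 2})
    (m k : ℕ) (hm : 0 < m) (hk : 0 < k) (hmk : m * k ≤ p) :
    φ (m * k) ≤ m * φ k :=
  sparse_eigenvalue_sublinear_general n p X φ hφ m k
end

section
/- Stability of weighted least squares coefficients in the weights: Let x₁,…,xₙ ∈ ℝ^p, d₁,…,dₙ ∈ ℝ, and nonnegative weight sequences (wᵢ) and (w'ᵢ). Suppose γ and γ' satisfy the normal equations Σᵢ wᵢ(dᵢ − ⟨xᵢ,γ⟩)xᵢ = 0 and Σᵢ w'ᵢ(dᵢ − ⟨xᵢ,γ'⟩)xᵢ = 0. Assume: (i) there is c > 0 with c‖v‖² ≤ Σᵢ w'ᵢ⟨xᵢ,v⟩² for all v ∈ ℝ^p; (ii) there is C ≥ 0 with Σᵢ ⟨xᵢ,v⟩² ≤ C·Σᵢ w'ᵢ⟨xᵢ,v⟩² for all v; (iii)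 |wᵢ − w'ᵢ| ≤ ε for all i; and (iv) Σᵢ (dᵢ − ⟨xᵢ,γ⟩)² ≤ B. Then ‖γ' − γ‖ ≤ ε·√(C·B/c). -/
/-!
Put `δ = γ' - γ`, `rᵢ = dᵢ - ⟨xᵢ, γ⟩` and `tᵢ = ⟨xᵢ, δ⟩`. Testing both normal equations against `δ`
and subtracting gives `S := Σᵢ w'ᵢ tᵢ² = Σᵢ (w'ᵢ - wᵢ) rᵢ tᵢ`, so by Cauchy–Schwarz
`S² ≤ ε² (Σᵢ rᵢ²)(Σᵢ tᵢ²) ≤ ε² B C S`. Hence `S ≤ ε² C B`, and `c ‖δ‖² ≤ S` finishes the proof.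
-/

open Finset

section
variable {ι κ : Type*} [Fintype ι] [Fintype κ]

theorem sum_mul_dotProduct_eq_zero {a : ι → ℝ} {x : ι → κ → ℝ} (h : ∑ i, a i • x i = 0)
    (v : κ → ℝ) : ∑ i, a i * (x i ⬝ᵥ v) = 0 := by
  simpa [sum_dotProduct, smul_dotProduct] using congrArg (· ⬝ᵥ v) h

theorem sum_mul_dotProduct_sub_sq_eq_of_normal_eqs {x : ι → κ → ℝ} {d w w' : ι → ℝ}
    {γ γ' : κ → ℝ} (hne : ∑ i, (w i * (d i - x i ⬝ᵥ γ)) • x i = 0)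
    (hne' : ∑ i, (w' i * (d i - x i ⬝ᵥ γ')) • x i = 0) :
    ∑ i, w' i * (x i ⬝ᵥ (γ' - γ)) ^ 2 =
      ∑ i, (w' i - w i) * (d i - x i ⬝ᵥ γ) * (x i ⬝ᵥ (γ' - γ)) := by
  have pointwise : ∀ i, w' i * (x i ⬝ᵥ (γ' - γ)) ^ 2
      - (w' i - w i) * (d i - x i ⬝ᵥ γ) * (x i ⬝ᵥ (γ' - γ))
      = w i * (d i - x i ⬝ᵥ γ) * (x i ⬝ᵥ (γ' - γ))
        - w' i * (d i - x i ⬝ᵥ γ') * (x i ⬝ᵥ (γ' - γ)) := by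
    intro i
    rw [dotProduct_sub]
    ring
  rw [← sub_eq_zero, ← sum_sub_distrib, sum_congr rfl fun i _ => pointwise i, sum_sub_distrib,
    sum_mul_dotProduct_eq_zero hne, sum_mul_dotProduct_eq_zero hne', sub_zero]

theorem sq_sum_mul_mul_le {a r t : ι → ℝ} {ε : ℝ} (ha : ∀ i, |a i| ≤ ε) :
    (∑ i, a i * r i * t i) ^ 2 ≤ ε ^ 2 * (∑ i, r i ^ 2) * ∑ i, t i ^ 2 := by
  calc (∑ i, a i * r i * t i) ^ 2 ≤ (∑ i, (a i * r i) ^ 2) * ∑ i, t i ^ 2 :=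
        sum_mul_sq_le_sq_mul_sq _ _ _
    _ ≤ (∑ i, ε ^ 2 * r i ^ 2) * ∑ i, t i ^ 2 := by
        gcongr with i
        rw [mul_pow, ← sq_abs (a i)]
        gcongr
        exact ha i
    _ = ε ^ 2 * (∑ i, r i ^ 2) * ∑ i, t i ^ 2 := by rw [← mul_sum]

end

theorem sqrt_le_mul_sqrt_div_of_sq_le_mul {q S ε K c : ℝ} (hε : 0 ≤ ε) (hc : 0 < c)
    (hq : c * q ≤ S) (hS : S ^ 2 ≤ ε ^ 2 * K * S) : √q ≤ ε * √(K / c) := by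
  rcases le_or_gt S 0 with hS0 | hS0
  · have hq0 : q ≤ 0 := nonpos_of_mul_nonpos_right (hq.trans hS0) hc
    rw [Real.sqrt_eq_zero'.mpr hq0]
    positivity
  · have hSK : S ≤ ε ^ 2 * K := le_of_mul_le_mul_right (by nlinarith) hS0
    have hqK : q ≤ ε ^ 2 * (K / c) := by
      rw [mul_div_assoc', le_div_iff₀ hc]
      linarith
    calc √q ≤ √(ε ^ 2 * (K / c)) := Real.sqrt_le_sqrt hqK
      _ = ε * √(K / c) := by rw [Real.sqrt_mul (sq_nonneg ε), Real.sqrt_sq hε]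

theorem weighted_ls_stability_general (n p : ℕ) (hn : 0 < n)
    (x : Fin n → Fin p → ℝ) (d : Fin n → ℝ) (w w' : Fin n → ℝ)
    (γ γ' : Fin p → ℝ)
    (hne1 : ∑ i, (w i * (d i - ∑ j, x i j * γ j)) • x i = (0 : Fin p → ℝ))
    (hne2 : ∑ i, (w' i * (d i - ∑ j, x i j * γ' j)) • x i = (0 : Fin p → ℝ))
    (c : ℝ) (hc : 0 < c)
    (hlow : ∀ v : Fin p → ℝ, c * ∑ j, (v j) ^ 2 ≤ ∑ i, w' i * (∑ j, x i j * v j) ^ 2)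
    (C : ℝ)
    (hup : ∀ v : Fin p → ℝ,
      ∑ i, (∑ j, x i j * v j) ^ 2 ≤ C * ∑ i, w' i * (∑ j, x i j * v j) ^ 2)
    (ε : ℝ) (hεw : ∀ i, |w i - w' i| ≤ ε)
    (B : ℝ) (hB : ∑ i, (d i - ∑ j, x i j * γ j) ^ 2 ≤ B) :
    Real.sqrt (∑ j, (γ' j - γ j) ^ 2) ≤ ε * Real.sqrt (C * B / c) := by
  have hε : 0 ≤ ε := (abs_nonneg _).trans (hεw ⟨0, hn⟩)
  have hB0 : 0 ≤ B := (sum_nonneg fun i _ => sq_nonneg _).trans hB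
  set S := ∑ i, w' i * (x i ⬝ᵥ (γ' - γ)) ^ 2
  have hS : S ^ 2 ≤ ε ^ 2 * (C * B) * S :=
    calc S ^ 2 = (∑ i, (w' i - w i) * (d i - x i ⬝ᵥ γ) * (x i ⬝ᵥ (γ' - γ))) ^ 2 :=
          congrArg (· ^ 2) (sum_mul_dotProduct_sub_sq_eq_of_normal_eqs hne1 hne2)
      _ ≤ ε ^ 2 * (∑ i, (d i - x i ⬝ᵥ γ) ^ 2) * ∑ i, (x i ⬝ᵥ (γ' - γ)) ^ 2 :=
          sq_sum_mul_mul_le fun i => abs_sub_comm (w i) (w' i) ▸ hεw i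
      _ ≤ ε ^ 2 * B * (C * S) := by gcongr; exacts [hB, hup (γ' - γ)]
      _ = ε ^ 2 * (C * B) * S := by ring
  exact sqrt_le_mul_sqrt_div_of_sq_le_mul hε hc (hlow (γ' - γ)) hS

theorem weighted_ls_stability (n p : ℕ) (hn : 0 < n)
    (x : Fin n → Fin p → ℝ) (d : Fin n → ℝ) (w w' : Fin n → ℝ)
    (hw : ∀ i, 0 ≤ w i) (hw' : ∀ i, 0 ≤ w' i)
    (γ γ' : Fin p → ℝ)
    (hne1 : ∑ i, (w i * (d i - ∑ j, x i j * γ j)) • x i = (0 : Fin p → ℝ))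
    (hne2 : ∑ i, (w' i * (d i - ∑ j, x i j * γ' j)) • x i = (0 : Fin p → ℝ))
    (c : ℝ) (hc : 0 < c)
    (hlow : ∀ v : Fin p → ℝ, c * ∑ j, (v j) ^ 2 ≤ ∑ i, w' i * (∑ j, x i j * v j) ^ 2)
    (C : ℝ) (hC : 0 ≤ C)
    (hup : ∀ v : Fin p → ℝ,
      ∑ i, (∑ j, x i j * v j) ^ 2 ≤ C * ∑ i, w' i * (∑ j, x i j * v j) ^ 2)
    (ε : ℝ) (hεw : ∀ i, |w i - w' i| ≤ ε)
    (B : ℝ) (hB : ∑ i, (d i - ∑ j, x i j * γ j) ^ 2 ≤ B) :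
    Real.sqrt (∑ j, (γ' j - γ j) ^ 2) ≤ ε * Real.sqrt (C * B / c) :=
  weighted_ls_stability_general n p hn x d w w' γ γ' hne1 hne2 c hc hlow C hup ε hεw B hB
end
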